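/- Let k be a field with char k ≠ 2 and Λ the exterior algebra on 8 generators with Lefschetz element w. Then multiplication by w from the degree-3 component to the degree-5 component is a bijection (both components have dimension C(8,3) = C(8,5) = 56). -/

import Mathlib

open ExteriorAlgebra

/-!
With `Λ = ∑ⱼ ∂_{f_j} ∂_{e_j}` the contraction dual to `w = ∑ⱼ e_j ∧ f_j`, one has the `sl₂`
relation `Λ (w x) = (4 - n) x + w Λ x` on `⋀ⁿ`, because `∑ᵢ eᵢ ∧ ∂_{eᵢ}` (the Euler operator)
acts on `⋀ⁿ` by `n`. If `x ∈ ⋀³` and `w x = 0`, the relation gives `x = -w m` with `m = Λ x ∈ ⋀¹`;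
applied once more to `w m`, which `w` kills and on which `Λ` is `3 m`, it gives `4 w m = 0`.
So `x = 0` as soon as `2` is invertible, and surjectivity follows from `dim ⋀³ = dim ⋀⁵`.
-/

namespace ExteriorAlgebra

open CliffordAlgebra (contractLeft contractLeft_ι_mul contractLeft_ι contractLeft_algebraMap)

variable {R M : Type*} [CommRing R] [AddCommGroup M] [Module R M]

theorem ι_mem_exteriorPower_one (m : M) : ι R m ∈ ⋀[R]^1 M := by
  rw [exteriorPower, pow_one]
  exact LinearMap.mem_range_self _ m

theorem mul_mem_exteriorPower {m n : ℕ} {x y : ExteriorAlgebra R M} (hx : x ∈ ⋀[R]^m M)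
    (hy : y ∈ ⋀[R]^n M) : x * y ∈ ⋀[R]^(m + n) M :=
  SetLike.mul_mem_graded hx hy

theorem contractLeft_mem_exteriorPower (d : Module.Dual R M) {n : ℕ} {x : ExteriorAlgebra R M}
    (hx : x ∈ ⋀[R]^n M) : contractLeft d x ∈ ⋀[R]^(n - 1) M := by
  induction hx using Submodule.pow_induction_on_left' with
  | algebraMap r => simp only [contractLeft_algebraMap, zero_mem]
  | add x y i _ _ hx hy => rw [map_add]; exact add_mem hx hy
  | mem_mul m hm i x hx ih =>
    obtain ⟨m, rfl⟩ := hm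
    rw [contractLeft_ι_mul]
    refine sub_mem (Submodule.smul_mem _ _ hx) ?_
    cases i with
    | zero =>
      obtain ⟨r, rfl⟩ := Submodule.mem_one.mp (pow_zero (LinearMap.range (ι R (M := M))) ▸ hx)
      simp only [contractLeft_algebraMap, mul_zero, zero_mem]
    | succ i => simpa [add_comm] using mul_mem_exteriorPower (ι_mem_exteriorPower_one m) ih

section Euler

variable {I : Type*} (b : Module.Basis I R M)

theorem contractLeft_coord_ι_basis_mul_self (i : I) (x : ExteriorAlgebra R M) :
    contractLeft (b.coord i) (ι R (b i) * x) = x - ι R (b i) * contractLeft (b.coord i) x := by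
  rw [contractLeft_ι_mul, Module.Basis.coord_apply, b.repr_self, Finsupp.single_eq_same, one_smul]

theorem contractLeft_coord_ι_basis_mul_of_ne {i i' : I} (h : i ≠ i') (x : ExteriorAlgebra R M) :
    contractLeft (b.coord i) (ι R (b i') * x) = -(ι R (b i') * contractLeft (b.coord i) x) := by
  rw [contractLeft_ι_mul, Module.Basis.coord_apply, b.repr_self, Finsupp.single_eq_of_ne h,
    zero_smul, zero_sub]

variable [Fintype I]

noncomputable def eulerOperator : Module.End R (ExteriorAlgebra R M) :=
  ∑ i, LinearMap.mulLeft R (ι R (b i)) ∘ₗ contractLeft (b.coord i)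

theorem eulerOperator_apply (x : ExteriorAlgebra R M) :
    eulerOperator b x = ∑ i, ι R (b i) * contractLeft (b.coord i) x := by
  simp [eulerOperator]

theorem eulerOperator_ι_mul (m : M) (x : ExteriorAlgebra R M) :
    eulerOperator b (ι R m * x) = ι R m * x + ι R m * eulerOperator b x := by
  have hm : ∑ i, b.coord i m • ι R (b i) = ι R m := by
    simp only [← map_smul, ← map_sum, Module.Basis.coord_apply, b.sum_repr]
  have hanti (i : I) : ι R (b i) * ι R m = -(ι R m * ι R (b i)) :=
    eq_neg_of_add_eq_zero_left (ι_add_mul_swap _ _)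
  simp only [eulerOperator_apply, contractLeft_ι_mul, mul_sub, mul_smul_comm, ← mul_assoc, hanti,
    neg_mul, sub_neg_eq_add, Finset.sum_add_distrib, Finset.mul_sum, ← smul_mul_assoc,
    ← Finset.sum_mul, hm]

theorem eulerOperator_of_mem {n : ℕ} {x : ExteriorAlgebra R M} (hx : x ∈ ⋀[R]^n M) :
    eulerOperator b x = (n : R) • x := by
  induction hx using Submodule.pow_induction_on_left' with
  | algebraMap r => simp [eulerOperator_apply, contractLeft_algebraMap]
  | add x y i _ _ hx hy => rw [map_add, hx, hy, smul_add]
  | mem_mul m hm i x hx ih =>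
    obtain ⟨m, rfl⟩ := hm
    rw [eulerOperator_ι_mul, ih, mul_smul_comm, Nat.cast_succ, add_smul, one_smul, add_comm]

end Euler

section Lefschetz

variable {J : Type*} (b : Module.Basis (J × Fin 2) R M)

theorem contractLeft_coord_pair_ι_pair_mul [DecidableEq J] (j j' : J) (x : ExteriorAlgebra R M) :
    contractLeft (b.coord (j, 1)) (contractLeft (b.coord (j, 0))
        (ι R (b (j', 0)) * ι R (b (j', 1)) * x)) =
      (if j = j' then
        x - ι R (b (j', 1)) * contractLeft (b.coord (j', 1)) x -
          ι R (b (j', 0)) * contractLeft (b.coord (j', 0)) x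
      else 0) +
      ι R (b (j', 0)) * ι R (b (j', 1)) *
        contractLeft (b.coord (j, 1)) (contractLeft (b.coord (j, 0)) x) := by
  have h01 (j j' : J) : (j, (0 : Fin 2)) ≠ (j', 1) := by simp
  rw [mul_assoc, mul_assoc]
  split_ifs with h
  · subst h
    simp only [contractLeft_coord_ι_basis_mul_self, contractLeft_coord_ι_basis_mul_of_ne b (h01 _ _),
      contractLeft_coord_ι_basis_mul_of_ne b (h01 _ _).symm, map_sub, map_neg, mul_sub, mul_neg,
      neg_neg]
    abel
  · have h0 : (j, (0 : Fin 2)) ≠ (j', 0) := by simpa using h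
    have h1 : (j, (1 : Fin 2)) ≠ (j', 1) := by simpa using h
    simp only [contractLeft_coord_ι_basis_mul_of_ne b h0, contractLeft_coord_ι_basis_mul_of_ne b h1,
      contractLeft_coord_ι_basis_mul_of_ne b (h01 _ _),
      contractLeft_coord_ι_basis_mul_of_ne b (h01 _ _).symm, mul_neg, neg_neg, zero_add]

variable [Fintype J]

noncomputable def lefschetz : ExteriorAlgebra R M :=
  ∑ j, ι R (b (j, 0)) * ι R (b (j, 1))

noncomputable def dualLefschetz : Module.End R (ExteriorAlgebra R M) :=
  ∑ j, contractLeft (b.coord (j, 1)) ∘ₗ contractLeft (b.coord (j, 0))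

theorem dualLefschetz_apply (x : ExteriorAlgebra R M) :
    dualLefschetz b x = ∑ j, contractLeft (b.coord (j, 1)) (contractLeft (b.coord (j, 0)) x) := by
  simp [dualLefschetz]

theorem eulerOperator_apply_pairs (x : ExteriorAlgebra R M) :
    eulerOperator b x = ∑ j, (ι R (b (j, 0)) * contractLeft (b.coord (j, 0)) x +
      ι R (b (j, 1)) * contractLeft (b.coord (j, 1)) x) := by
  rw [eulerOperator_apply, Fintype.sum_prod_type]
  simp only [Fin.sum_univ_two]

theorem dualLefschetz_lefschetz_mul (x : ExteriorAlgebra R M) :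
    dualLefschetz b (lefschetz b * x) =
      (Fintype.card J : R) • x - eulerOperator b x + lefschetz b * dualLefschetz b x := by
  classical
  simp only [dualLefschetz_apply, lefschetz, Finset.sum_mul, map_sum,
    contractLeft_coord_pair_ι_pair_mul, Finset.sum_add_distrib, Fintype.sum_ite_eq',
    eulerOperator_apply_pairs, Finset.mul_sum, Finset.sum_sub_distrib, Finset.sum_const,
    Finset.card_univ, Nat.cast_smul_eq_nsmul]
  rw [Finset.sum_comm (γ := J)]
  abel

theorem dualLefschetz_lefschetz_mul_of_mem {n : ℕ} {x : ExteriorAlgebra R M}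
    (hx : x ∈ ⋀[R]^n M) :
    dualLefschetz b (lefschetz b * x) =
      ((Fintype.card J : R) - n) • x + lefschetz b * dualLefschetz b x := by
  rw [dualLefschetz_lefschetz_mul, eulerOperator_of_mem b hx, sub_smul]

theorem dualLefschetz_ι (m : M) : dualLefschetz b (ι R m) = 0 := by
  simp [dualLefschetz_apply, contractLeft_ι, contractLeft_algebraMap]

theorem lefschetz_mem : lefschetz b ∈ ⋀[R]^2 M :=
  Submodule.sum_mem _ fun _ _ =>
    mul_mem_exteriorPower (ι_mem_exteriorPower_one _) (ι_mem_exteriorPower_one _)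

theorem lefschetz_mul_mem {n : ℕ} {x : ExteriorAlgebra R M} (hx : x ∈ ⋀[R]^n M) :
    lefschetz b * x ∈ ⋀[R]^(n + 2) M :=
  add_comm 2 n ▸ mul_mem_exteriorPower (lefschetz_mem b) hx

theorem dualLefschetz_mem {n : ℕ} {x : ExteriorAlgebra R M} (hx : x ∈ ⋀[R]^n M) :
    dualLefschetz b x ∈ ⋀[R]^(n - 2) M := by
  rw [dualLefschetz_apply]
  exact Submodule.sum_mem _ fun _ _ => Nat.sub_sub n 1 1 ▸
    contractLeft_mem_exteriorPower _ (contractLeft_mem_exteriorPower _ hx)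

theorem eq_zero_of_lefschetz_mul_eq_zero (hJ : Fintype.card J = 4) (h2 : IsUnit (2 : R))
    {x : ExteriorAlgebra R M} (hx : x ∈ ⋀[R]^3 M) (hwx : lefschetz b * x = 0) : x = 0 := by
  obtain ⟨m, hm⟩ : ∃ m, ι R m = dualLefschetz b x := by
    have h := dualLefschetz_mem b hx
    rwa [exteriorPower, show 3 - 2 = 1 from rfl, pow_one] at h
  set y := lefschetz b * ι R m
  have hxy : x = -y := by
    have h := dualLefschetz_lefschetz_mul_of_mem b hx
    rw [hwx, map_zero, hJ, ← hm] at h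
    linear_combination (norm := module) h.symm
  have hwy : lefschetz b * y = 0 := by rw [← neg_eq_zero, ← mul_neg, ← hxy, hwx]
  have hΛy : dualLefschetz b y = (3 : R) • ι R m := by
    rw [dualLefschetz_lefschetz_mul_of_mem b (ι_mem_exteriorPower_one m), dualLefschetz_ι, hJ]
    norm_num
  have h4y : (4 : R) • y = 0 := by
    have h := dualLefschetz_lefschetz_mul_of_mem b (lefschetz_mul_mem b (ι_mem_exteriorPower_one m))
    rw [hwy, map_zero, hΛy, hJ, mul_smul_comm] at h
    linear_combination (norm := module) h.symm
  have h4 : IsUnit (4 : R) := by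
    rw [show (4 : R) = 2 * 2 by norm_num]
    exact h2.mul h2
  rw [hxy, (h4.smul_eq_zero).mp h4y, neg_zero]

end Lefschetz

theorem exists_lefschetz_mul_eq {K V J : Type*} [Field K] [AddCommGroup V] [Module K V] [Fintype J]
    (b : Module.Basis (J × Fin 2) K V) (hJ : Fintype.card J = 4) (h2 : (2 : K) ≠ 0)
    {y : ExteriorAlgebra K V} (hy : y ∈ ⋀[K]^5 V) :
    ∃ x ∈ ⋀[K]^3 V, lefschetz b * x = y := by
  have : Module.Finite K V := Module.Finite.of_basis b
  let f : ⋀[K]^3 V →ₗ[K] ⋀[K]^5 V :=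
    LinearMap.codRestrict _ (LinearMap.mulLeft K (lefschetz b) ∘ₗ Submodule.subtype _)
      fun x => lefschetz_mul_mem b x.2
  have hf : Function.Injective f := by
    rw [← LinearMap.ker_eq_bot, LinearMap.ker_eq_bot']
    exact fun x hx => Subtype.ext
      (eq_zero_of_lefschetz_mul_eq_zero b hJ h2.isUnit x.2 (congrArg Subtype.val hx))
  have hdim : Module.finrank K (⋀[K]^3 V) = Module.finrank K (⋀[K]^5 V) := by
    rw [exteriorPower.finrank_eq, exteriorPower.finrank_eq, Module.finrank_eq_card_basis b,
      Fintype.card_prod, hJ]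
    rfl
  obtain ⟨x, hx⟩ := (LinearMap.injective_iff_surjective_of_finrank_eq_finrank hdim).mp hf ⟨y, hy⟩
  exact ⟨x, x.2, congrArg Subtype.val hx⟩

end ExteriorAlgebra

/-- Let `k` be a field with `char k ≠ 2` and `Λ` the exterior algebra on 8 generators with
Lefschetz element `w`.  Then multiplication by `w` from the degree-3 component to the
degree-5 component is a bijection, and both components have dimension `C(8,3) = C(8,5) = 56`. -/
theorem stmt_2 (k : Type*) [Field k] (hchar : (ringChar k) ≠ 2)
    (θ : Fin 8 → ExteriorAlgebra k (Fin 8 → k))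
    (hθ : ∀ i, θ i = ExteriorAlgebra.ι k (Pi.single i 1))
    (w : ExteriorAlgebra k (Fin 8 → k))
    (hw : w = θ 0 * θ 1 + θ 2 * θ 3 + θ 4 * θ 5 + θ 6 * θ 7) :
    (∀ x ∈ ⋀[k]^3 (Fin 8 → k), w * x ∈ ⋀[k]^5 (Fin 8 → k) ∧ (w * x = 0 → x = 0)) ∧
    (∀ y ∈ ⋀[k]^5 (Fin 8 → k), ∃ x ∈ ⋀[k]^3 (Fin 8 → k), w * x = y) ∧
    Module.finrank k (⋀[k]^3 (Fin 8 → k)) = Nat.choose 8 3 ∧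
    Module.finrank k (⋀[k]^5 (Fin 8 → k)) = Nat.choose 8 5 ∧
    Nat.choose 8 3 = 56 ∧ Nat.choose 8 5 = 56 := by
  -- `b (j, t)` is the standard basis vector `e_{2j+t}`, so `lefschetz b` is `w`.
  let b : Module.Basis (Fin 4 × Fin 2) k (Fin 8 → k) :=
    (Pi.basisFun k (Fin (4 * 2))).reindex finProdFinEquiv.symm
  have hwb : w = lefschetz b := by
    simp only [hw, hθ, lefschetz, Fin.sum_univ_four, b, Module.Basis.reindex_apply,
      Equiv.symm_symm, Pi.basisFun_apply]
    rfl
  have h2 : (2 : k) ≠ 0 := Ring.two_ne_zero hchar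
  have hfinrank (n : ℕ) : Module.finrank k (⋀[k]^n (Fin 8 → k)) = Nat.choose 8 n := by
    rw [exteriorPower.finrank_eq, Module.finrank_fintype_fun_eq_card, Fintype.card_fin]
  subst hwb
  exact ⟨fun x hx => ⟨lefschetz_mul_mem b hx, eq_zero_of_lefschetz_mul_eq_zero b rfl h2.isUnit hx⟩,
    fun y hy => exists_lefschetz_mul_eq b rfl h2 hy, hfinrank 3, hfinrank 5, rfl, rfl⟩
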